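/- Let R be a commutative ring and φ : E¹ → E² an R-linear map between R-modules. Then the two-term complex (E•, φ) is equivalent to a two-term complex of the form (0 → F), for some R-module F, if and only if φ admits an R-linear left inverse, i.e. there exists an R-linear map η : E² → E¹ with η ∘ φ = id_{E¹}. -/

import Mathlib

universe u v

/-- The two-term complexes `(E•, φ)` and `(F•, ψ)` of `R`-modules are equivalent in the
2-category of two-term complexes: there are 1-morphisms `f• : (E•, φ) → (F•, ψ)` and
`g• : (F•, ψ) → (E•, φ)` together with 2-morphisms (homotopies) `g• ∘ f• ⇒ id` and
`f• ∘ g• ⇒ id`. -/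
def ComplexEquiv {R : Type*} [CommRing R] {E1 E2 F1 F2 : Type*}
    [AddCommGroup E1] [Module R E1] [AddCommGroup E2] [Module R E2]
    [AddCommGroup F1] [Module R F1] [AddCommGroup F2] [Module R F2]
    (φ : E1 →ₗ[R] E2) (ψ : F1 →ₗ[R] F2) : Prop :=
  ∃ (f1 : E1 →ₗ[R] F1) (f2 : E2 →ₗ[R] F2) (g1 : F1 →ₗ[R] E1) (g2 : F2 →ₗ[R] E2)
    (η : E2 →ₗ[R] E1) (ζ : F2 →ₗ[R] F1),
    ψ ∘ₗ f1 = f2 ∘ₗ φ ∧ φ ∘ₗ g1 = g2 ∘ₗ ψ ∧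
    LinearMap.id = g1 ∘ₗ f1 + η ∘ₗ φ ∧ LinearMap.id = g2 ∘ₗ f2 + φ ∘ₗ η ∧
    LinearMap.id = f1 ∘ₗ g1 + ζ ∘ₗ ψ ∧ LinearMap.id = f2 ∘ₗ g2 + ψ ∘ₗ ζ

/-! If `φ` has a left inverse `η`, the complex `(E•, φ)` is homotopy equivalent to
`0 → E² ⧸ range φ`: the homotopy `g• ∘ f• ⇒ id` is `η` itself, and `g²` is the splitting of the
quotient map induced by the projection `id - φ ∘ η` onto a complement of `range φ`. Conversely,
in any equivalence with a complex whose first term vanishes, the homotopy `g• ∘ f• ⇒ id`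
restricted to degree one says `η ∘ φ = id`. -/

namespace ComplexEquiv

variable {R : Type*} [CommRing R] {E1 E2 F1 F2 : Type*}
  [AddCommGroup E1] [Module R E1] [AddCommGroup E2] [Module R E2]
  [AddCommGroup F1] [Module R F1] [AddCommGroup F2] [Module R F2]

theorem exists_leftInverse [Subsingleton F1] {φ : E1 →ₗ[R] E2} {ψ : F1 →ₗ[R] F2}
    (h : ComplexEquiv φ ψ) : ∃ η : E2 →ₗ[R] E1, η ∘ₗ φ = LinearMap.id := by
  obtain ⟨f1, -, g1, -, η, -, -, -, hid1, -⟩ := h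
  have hg1 : g1 = 0 := Subsingleton.elim _ _
  exact ⟨η, by simpa [hg1] using hid1.symm⟩

end ComplexEquiv

section LeftInverse

variable {R : Type*} [CommRing R] {E1 E2 : Type*}
  [AddCommGroup E1] [Module R E1] [AddCommGroup E2] [Module R E2]
  {φ : E1 →ₗ[R] E2} {η : E2 →ₗ[R] E1}

theorem range_le_ker_id_sub_comp_of_leftInverse (hη : η ∘ₗ φ = LinearMap.id) :
    LinearMap.range φ ≤ LinearMap.ker (LinearMap.id - φ ∘ₗ η) := by
  rintro _ ⟨x, rfl⟩
  simp [← LinearMap.comp_apply η φ, hη]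

def quotientRangeSection (hη : η ∘ₗ φ = LinearMap.id) : (E2 ⧸ LinearMap.range φ) →ₗ[R] E2 :=
  (LinearMap.range φ).liftQ _ (range_le_ker_id_sub_comp_of_leftInverse hη)

@[simp]
theorem quotientRangeSection_mk (hη : η ∘ₗ φ = LinearMap.id) (x : E2) :
    quotientRangeSection hη (Submodule.Quotient.mk x) = x - φ (η x) :=
  rfl

theorem mkQ_comp_quotientRangeSection (hη : η ∘ₗ φ = LinearMap.id) :
    (LinearMap.range φ).mkQ ∘ₗ quotientRangeSection hη = LinearMap.id := by
  ext x
  simp [Submodule.Quotient.mk_eq_zero]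

theorem complexEquiv_zero_quotientRange_of_leftInverse (F1 : Type*) [AddCommGroup F1]
    [Module R F1] [Subsingleton F1] (hη : η ∘ₗ φ = LinearMap.id) :
    ComplexEquiv φ (0 : F1 →ₗ[R] E2 ⧸ LinearMap.range φ) := by
  refine ⟨0, (LinearMap.range φ).mkQ, 0, quotientRangeSection hη, η, 0,
    ?_, ?_, ?_, ?_, ?_, ?_⟩
  · simp [LinearMap.range_mkQ_comp]
  · ext x
    simp [Subsingleton.elim x 0]
  · simp [hη]
  · ext x
    simp
  · exact Subsingleton.elim _ _
  · simp [mkQ_comp_quotientRangeSection hη]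

end LeftInverse

/-- A two-term complex `(E•, φ)` of `R`-modules is equivalent to a two-term complex of the form
`(0 → F)` for some `R`-module `F` if and only if `φ` admits an `R`-linear left inverse. -/
theorem complexEquiv_zero_iff_leftInverse {R : Type*} [CommRing R]
    {E1 : Type v} {E2 : Type u}
    [AddCommGroup E1] [Module R E1] [AddCommGroup E2] [Module R E2]
    (φ : E1 →ₗ[R] E2) :
    (∃ F : ModuleCat.{u} R, ComplexEquiv φ (0 : PUnit.{u + 1} →ₗ[R] F)) ↔
      ∃ η : E2 →ₗ[R] E1, η ∘ₗ φ = LinearMap.id := by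
  constructor
  · rintro ⟨F, h⟩
    exact h.exists_leftInverse
  · rintro ⟨η, hη⟩
    exact ⟨.of R (E2 ⧸ LinearMap.range φ), complexEquiv_zero_quotientRange_of_leftInverse PUnit hη⟩
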